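/- Let P = (p_1, …, p_n) be a finite sequence of pairwise distinct points in ℝ^d and q a query point whose distances to p_1, …, p_n are pairwise distinct. Fix 1 ≤ j < ℓ ≤ n and suppose that within the prefix P_{1:ℓ} the j+1 points closest to q are p_{i_1}, …, p_{i_j}, p_ℓ, where p_ℓ is the (j+1)-th nearest and i_1, …, i_j < ℓ. Then there exists m ∈ {1, …, j} such that Cell(p_{i_m}; P_{1:ℓ}) is a proper subset of Cell(p_{i_m}; P_{1:ℓ−1}); i.e., the insertion of p_ℓ prunes the Voronoi cell of one of the j nearer neighbors, so p_ℓ is a successor of p_{i_m}. -/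

import Mathlib

/-!
Walk from `q` to the new site `p_ℓ` along the segment `[q, p_ℓ]`. By the triangle inequality
every point of the segment is strictly closer to `p_ℓ` than to any site of `P_{1:ℓ-1}` other than
the `j` near ones. The points strictly closer to `p_ℓ` than to all old sites, and the points whose
nearest old site is a near one, form two open sets covering the segment, one containing `p_ℓ` and
the other `q`; since the segment is connected they meet. At a common point `x`, the nearest old
site `p_{i_m}` is a near one and `x` lies in its old cell but not in its new one.
-/

open Set

noncomputable section

/-- Euclidean space `ℝ^d`. -/
abbrev E (d : ℕ) := EuclideanSpace ℝ (Fin d)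

/-- The Voronoi cell of `p` with respect to the site set `S`:
all points at least as close to `p` as to every site of `S`. -/
def cell {d : ℕ} (p : E d) (S : Set (E d)) : Set (E d) :=
  {x | ∀ s ∈ S, dist x p ≤ dist x s}

/-- The prefix set `P_{1:m}` consisting of the first `m` points of the
sequence `p` (0-based indices `< m`). -/
def pref {d n : ℕ} (p : Fin n → E d) (m : ℕ) : Set (E d) :=
  p '' {i : Fin n | (i : ℕ) < m}

/-- `p j` is a successor of `p i` (`p j ∈ L i`): `i < j` and the insertion of
`p j` prunes the Voronoi cell of `p i`, i.e. `Cell(p_i; P_{1:j})` is a proper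
subset of `Cell(p_i; P_{1:j-1})` (in 1-based notation). -/
def isSucc {d n : ℕ} (p : Fin n → E d) (i j : Fin n) : Prop :=
  i < j ∧ cell (p i) (pref p ((j : ℕ) + 1)) ⊂ cell (p i) (pref p (j : ℕ))

/-- `p i` is the nearest neighbor `Φ_{1:m}(q)` of `q` in the prefix `P_{1:m}`. -/
def isNearest {d n : ℕ} (p : Fin n → E d) (q : E d) (m : ℕ) (i : Fin n) : Prop :=
  (i : ℕ) < m ∧ ∀ j : Fin n, (j : ℕ) < m → dist q (p i) ≤ dist q (p j)

section Segment

variable {V : Type*} [SeminormedAddCommGroup V] [NormedSpace ℝ V]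

theorem dist_lt_dist_of_mem_segment {q c b x : V} (hx : x ∈ segment ℝ q c)
    (h : dist q c < dist q b) : dist x c < dist x b := by
  have := dist_add_dist_of_mem_segment hx
  linarith [dist_triangle q x b]

theorem exists_forall_dist_lt_and_near_dist_lt {ι : Type*} [Nonempty ι] {S : Set V}
    (hS : S.Finite) {f : ι → V} {q c : V} (hnear : ∀ i, dist q (f i) < dist q c)
    (hfar : ∀ b ∈ S \ range f, dist q c < dist q b) :
    ∃ x, (∀ s ∈ S, dist x c < dist x s) ∧ ∃ i, ∀ b ∈ S \ range f, dist x (f i) < dist x b := by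
  set U := {x | ∀ s ∈ S, dist x c < dist x s}
  set W := {x | ∃ i, ∀ b ∈ S \ range f, dist x (f i) < dist x b}
  have hU : IsOpen U := by
    simpa only [U, ofPred_forall] using
      hS.isOpen_biInter fun s _ => isOpen_lt (by fun_prop) (by fun_prop)
  have hW : IsOpen W := by
    simpa only [W, ofPred_exists, ofPred_forall] using
      isOpen_iUnion fun i => hS.sdiff.isOpen_biInter fun b _ =>
        isOpen_lt (by fun_prop) (by fun_prop)
  have hcover : segment ℝ q c ⊆ U ∪ W := by
    intro x hx
    by_contra hxUW
    obtain ⟨hxU, hxW⟩ := not_or.1 hxUW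
    obtain ⟨s, hs, hsx⟩ : ∃ s ∈ S, dist x s ≤ dist x c := by simpa [U] using hxU
    by_cases hsf : s ∈ range f
    · obtain ⟨i, rfl⟩ := hsf
      exact hxW ⟨i, fun b hb => hsx.trans_lt (dist_lt_dist_of_mem_segment hx (hfar b hb))⟩
    · exact (dist_lt_dist_of_mem_segment hx (hfar s ⟨hs, hsf⟩)).not_ge hsx
  have hcU : c ∈ U := by
    intro s hs
    by_cases hsf : s ∈ range f
    · obtain ⟨i, rfl⟩ := hsf
      linarith [hnear i, dist_triangle q (f i) c, dist_comm c (f i), dist_self c]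
    · exact dist_lt_dist_of_mem_segment (right_mem_segment ℝ q c) (hfar s ⟨hs, hsf⟩)
  obtain ⟨i⟩ := ‹Nonempty ι›
  have hqW : q ∈ W := ⟨i, fun b hb => (hnear i).trans (hfar b hb)⟩
  obtain ⟨x, -, hxU, hxW⟩ := (convex_segment q c).isPreconnected U W hU hW hcover
    ⟨c, right_mem_segment ℝ q c, hcU⟩ ⟨q, left_mem_segment ℝ q c, hqW⟩
  exact ⟨x, hxU, hxW⟩

end Segment

theorem exists_apply_nearest_of_forall_dist_lt {α ι : Type*} [PseudoMetricSpace α]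
    [Finite ι] {S : Set α} {f : ι → α} {x : α} {i : ι}
    (hi : ∀ b ∈ S \ range f, dist x (f i) < dist x b) :
    ∃ k, ∀ s ∈ S, dist x (f k) ≤ dist x s := by
  have : Nonempty ι := ⟨i⟩
  obtain ⟨k, hk⟩ := Finite.exists_min fun i => dist x (f i)
  refine ⟨k, fun s hs => ?_⟩
  by_cases hsf : s ∈ range f
  · obtain ⟨i', rfl⟩ := hsf
    exact hk i'
  · exact (hk i).trans (hi s ⟨hs, hsf⟩).le

section Voronoi

variable {d n : ℕ}

theorem cell_anti {p : E d} {S T : Set (E d)} (h : S ⊆ T) : cell p T ⊆ cell p S :=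
  fun _ hx s hs => hx s (h hs)

theorem cell_ssubset_cell_of_dist_lt {p c x : E d} {S T : Set (E d)} (hST : S ⊆ T) (hc : c ∈ T)
    (hx : x ∈ cell p S) (hxc : dist x c < dist x p) : cell p T ⊂ cell p S :=
  (ssubset_iff_of_subset (cell_anti hST)).2 ⟨x, hx, fun hxT => hxc.not_ge (hxT c hc)⟩

theorem pref_finite (p : Fin n → E d) (m : ℕ) : (pref p m).Finite :=
  (toFinite _).image p

theorem pref_mono (p : Fin n → E d) : Monotone (pref p) :=
  fun _ _ h => image_mono fun _ hi => lt_of_lt_of_le hi h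

theorem apply_mem_pref (p : Fin n → E d) {m : ℕ} {i : Fin n} (h : (i : ℕ) < m) :
    p i ∈ pref p m :=
  mem_image_of_mem p h

theorem isSucc_of_mem_cell_of_dist_lt {p : Fin n → E d} {i k : Fin n} (hik : i < k) {x : E d}
    (hx : x ∈ cell (p i) (pref p k)) (hxk : dist x (p k) < dist x (p i)) : isSucc p i k :=
  ⟨hik, cell_ssubset_cell_of_dist_lt (pref_mono p (Nat.le_succ _))
    (apply_mem_pref p (Nat.lt_succ_self _)) hx hxk⟩

end Voronoi

theorem stmt9_general
    {d n j : ℕ} (hj1 : 1 ≤ j)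
    (p : Fin n → E d)
    (q : E d)
    (ℓ : Fin n)
    (ι : Fin j → Fin n)
    (hιlt : ∀ a, ι a < ℓ)
    (hcloser : ∀ a, dist q (p (ι a)) < dist q (p ℓ))
    (hfar : ∀ b : Fin n, b ≤ ℓ → (∀ a, ι a ≠ b) → b ≠ ℓ →
      dist q (p ℓ) < dist q (p b)) :
    ∃ m : Fin j, isSucc p (ι m) ℓ := by
  have : Nonempty (Fin j) := ⟨⟨0, hj1⟩⟩
  have hfar' : ∀ s ∈ pref p ℓ \ range (p ∘ ι), dist q (p ℓ) < dist q s := by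
    rintro _ ⟨⟨b, hb, rfl⟩, hbι⟩
    exact hfar b (le_of_lt hb) (fun a hab => hbι ⟨a, congrArg p hab⟩) (ne_of_lt hb)
  obtain ⟨x, hxℓ, i, hi⟩ :=
    exists_forall_dist_lt_and_near_dist_lt (pref_finite p ℓ) hcloser hfar'
  obtain ⟨m, hm⟩ := exists_apply_nearest_of_forall_dist_lt hi
  have hιpref : range (p ∘ ι) ⊆ pref p ℓ :=
    range_subset_iff.2 fun a => apply_mem_pref p (hιlt a)
  exact ⟨m, isSucc_of_mem_cell_of_dist_lt (hιlt m) hm (hxℓ _ (hιpref (mem_range_self m)))⟩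

/-- if, within the prefix `P_{1:ℓ}`, the `j+1` points closest to
`q` are `p_{i_1}, …, p_{i_j}, p_ℓ` with `p_ℓ` the (j+1)-th nearest, then the
insertion of `p_ℓ` prunes the Voronoi cell of some `p_{i_m}`, i.e. `p_ℓ` is a
successor of some `p_{i_m}`. -/
theorem stmt9
    {d n j : ℕ} (hd : 1 ≤ d) (hj1 : 1 ≤ j)
    (p : Fin n → E d) (hp : Function.Injective p)
    (q : E d) (hq : Function.Injective fun i => dist q (p i))
    (ℓ : Fin n) (hjℓ : j < (ℓ : ℕ) + 1)
    (ι : Fin j → Fin n) (hιinj : Function.Injective ι)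
    (hιlt : ∀ a, ι a < ℓ)
    (hcloser : ∀ a, dist q (p (ι a)) < dist q (p ℓ))
    (hfar : ∀ b : Fin n, b ≤ ℓ → (∀ a, ι a ≠ b) → b ≠ ℓ →
      dist q (p ℓ) < dist q (p b)) :
    ∃ m : Fin j, isSucc p (ι m) ℓ :=
  stmt9_general hj1 p q ℓ ι hιlt hcloser hfar
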